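/- Maximum principle for the Godunov-type scheme: let $g \in C^1([0,\rho_{\max}];\mathbb{R}^+)$ with $g' \geq 0$ and $v \in C^1([0,\rho_{\max}];\mathbb{R}^+)$ with $v' \leq 0$, let $(\gamma_k)_{k=0}^{N-1}$ be non-negative non-increasing with $\sum\gamma_k = 1$, and let $\lambda > 0$ satisfy the CFL condition $\lambda(\gamma_0\|v'\|\|g\| + \|v\|\|g'\|) \leq 1$. If $(\rho_j^0)_{j\in\mathbb{Z}} \subset [\rho_m,\rho_M] \subseteq [0,\rho_{\max}]$ and $\rho_j^{n+1} = \rho_j^n - \lambda(V_{j+1/2}^n g(\rho_j^n) - V_{j-1/2}^n g(\rho_{j-1}^n))$ with $V_{j+1/2}^n = \sum_{k=0}^{N-1}\gamma_k v(\rho_{j+k+1}^n)$, then $\rho_m \leq \rho_j^n \leq \rho_M$ for all $j \in \mathbb{Z}$, $n \in \mathbb{N}$. -/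

import Mathlib

/-!
Write the flux difference as
$V_{j+1/2}(g(ρ_j) - g(ρ_{j-1})) + g(ρ_{j-1})(V_{j+1/2} - V_{j-1/2})$.
As $g$ is nondecreasing and $ρ_{j-1} ≥ ρ_m$, the first term is at most
$\|v\|\|g'\|(ρ_j - ρ_m)$. Summation by parts against the nonincreasing weights $γ_k$,
together with the antitonicity of $v$, gives
$V_{j+1/2} - V_{j-1/2} ≤ γ_0(v(ρ_m) - v(ρ_j)) ≤ γ_0\|v'\|(ρ_j - ρ_m)$, so the second term is
at most $γ_0\|g\|\|v'\|(ρ_j - ρ_m)$. By the CFL condition one step therefore lowers $ρ_j$ by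
at most $ρ_j - ρ_m$. The upper bound is symmetric, and induction on $n$ concludes.
-/

noncomputable def supAbs (f : ℝ → ℝ) (s : Set ℝ) : ℝ :=
  sSup ((fun x => |f x|) '' s)

open Set
open scoped NNReal

lemma supAbs_nonneg (f : ℝ → ℝ) (s : Set ℝ) : 0 ≤ supAbs f s :=
  Real.sSup_nonneg (by rintro _ ⟨x, -, rfl⟩; exact abs_nonneg _)

lemma abs_le_supAbs {f : ℝ → ℝ} {s : Set ℝ} (hs : IsCompact s) (hf : ContinuousOn f s)
    {x : ℝ} (hx : x ∈ s) : |f x| ≤ supAbs f s :=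
  le_csSup (hs.image_of_continuousOn hf.abs).bddAbove ⟨x, hx, rfl⟩

lemma mapsTo_Icc_supAbs {f : ℝ → ℝ} {s : Set ℝ} (hs : IsCompact s) (hf : ContinuousOn f s)
    (hf₀ : ∀ x ∈ s, 0 ≤ f x) : MapsTo f s (Icc 0 (supAbs f s)) :=
  fun x hx => ⟨hf₀ x hx, (le_abs_self _).trans (abs_le_supAbs hs hf hx)⟩

lemma lipschitzOnWith_supAbs_of_hasDerivAt {f f' : ℝ → ℝ} {s : Set ℝ} (hs : IsCompact s)
    (hs' : Convex ℝ s) (hf : ∀ x ∈ s, HasDerivAt f (f' x) x) (hf' : ContinuousOn f' s) :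
    LipschitzOnWith (Real.toNNReal (supAbs f' s)) f s := by
  refine hs'.lipschitzOnWith_of_nnnorm_hasDerivWithin_le (fun x hx => (hf x hx).hasDerivWithinAt)
    fun x hx => ?_
  rw [← NNReal.coe_le_coe, coe_nnnorm, Real.coe_toNNReal _ (supAbs_nonneg f' s)]
  exact abs_le_supAbs hs hf' hx

lemma monotoneOn_of_hasDerivAt_nonneg {f f' : ℝ → ℝ} {s : Set ℝ} (hs : Convex ℝ s)
    (hf : ∀ x ∈ s, HasDerivAt f (f' x) x) (hf' : ∀ x ∈ s, 0 ≤ f' x) : MonotoneOn f s :=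
  monotoneOn_of_hasDerivWithinAt_nonneg hs (HasDerivAt.continuousOn hf)
    (fun x hx => (hf x (interior_subset hx)).hasDerivWithinAt)
    fun x hx => hf' x (interior_subset hx)

lemma antitoneOn_of_hasDerivAt_nonpos {f f' : ℝ → ℝ} {s : Set ℝ} (hs : Convex ℝ s)
    (hf : ∀ x ∈ s, HasDerivAt f (f' x) x) (hf' : ∀ x ∈ s, f' x ≤ 0) : AntitoneOn f s :=
  antitoneOn_of_hasDerivWithinAt_nonpos hs (HasDerivAt.continuousOn hf)
    (fun x hx => (hf x (interior_subset hx)).hasDerivWithinAt)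
    fun x hx => hf' x (interior_subset hx)

lemma LipschitzOnWith.abs_sub_le_mul_sub {K : ℝ≥0} {f : ℝ → ℝ} {s : Set ℝ}
    (hf : LipschitzOnWith K f s) {a b : ℝ} (ha : a ∈ s) (hb : b ∈ s) (hab : a ≤ b) :
    |f b - f a| ≤ K * (b - a) := by
  simpa [Real.dist_eq, abs_of_nonneg (sub_nonneg.2 hab)] using hf.dist_le_mul b hb a ha

open Finset in
lemma sum_mul_succ_sub_sum_mul_le {N : ℕ} (hN : 1 ≤ N) {γ f : ℕ → ℝ} {b : ℝ}
    (hγ_nonneg : ∀ k < N, 0 ≤ γ k) (hγ_anti : ∀ k, k + 1 < N → γ (k + 1) ≤ γ k)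
    (hf : ∀ k, 1 ≤ k → k ≤ N → f k ≤ b) :
    ∑ k ∈ range N, γ k * f (k + 1) - ∑ k ∈ range N, γ k * f k ≤ γ 0 * (b - f 0) := by
  obtain ⟨M, rfl⟩ : ∃ M, N = M + 1 := ⟨N - 1, by omega⟩
  calc ∑ k ∈ range (M + 1), γ k * f (k + 1) - ∑ k ∈ range (M + 1), γ k * f k
      = ∑ k ∈ range M, (γ k - γ (k + 1)) * f (k + 1) + γ M * f (M + 1) - γ 0 * f 0 := by
        rw [sum_range_succ, sum_range_succ']
        simp only [sub_mul, sum_sub_distrib]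
        ring
    _ ≤ ∑ k ∈ range M, (γ k - γ (k + 1)) * b + γ M * b - γ 0 * f 0 := by
        gcongr with k hk
        · exact sub_nonneg.2 (hγ_anti k (by have := mem_range.1 hk; omega))
        · exact hf _ (by omega) (by have := mem_range.1 hk; omega)
        · exact hγ_nonneg M (by omega)
        · exact hf _ (by omega) le_rfl
    _ = γ 0 * (b - f 0) := by
        rw [← sum_mul, sum_range_sub']
        ring

lemma le_sum_mul_succ_sub_sum_mul {N : ℕ} (hN : 1 ≤ N) {γ f : ℕ → ℝ} {a : ℝ}
    (hγ_nonneg : ∀ k < N, 0 ≤ γ k) (hγ_anti : ∀ k, k + 1 < N → γ (k + 1) ≤ γ k)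
    (hf : ∀ k, 1 ≤ k → k ≤ N → a ≤ f k) :
    γ 0 * (a - f 0) ≤
      ∑ k ∈ Finset.range N, γ k * f (k + 1) - ∑ k ∈ Finset.range N, γ k * f k := by
  have := sum_mul_succ_sub_sum_mul_le hN hγ_nonneg hγ_anti (f := fun k => -f k)
    fun k hk₁ hk₂ => neg_le_neg (hf k hk₁ hk₂)
  simp only [mul_neg, Finset.sum_neg_distrib] at this
  linarith

/-- `nonlocalVelocity N γ v u j` is the paper's $V_{j+1/2}$ for the cell averages `u`. -/
def nonlocalVelocity (N : ℕ) (γ : ℕ → ℝ) (v : ℝ → ℝ) (u : ℤ → ℝ) (j : ℤ) : ℝ :=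
  ∑ k ∈ Finset.range N, γ k * v (u (j + k + 1))

def godunovStep (lam : ℝ) (g : ℝ → ℝ) (V u : ℤ → ℝ) (j : ℤ) : ℝ :=
  u j - lam * (V j * g (u j) - V (j - 1) * g (u (j - 1)))

section NonlocalVelocity

variable {N : ℕ} {γ : ℕ → ℝ} {v : ℝ → ℝ} {u : ℤ → ℝ}

lemma nonlocalVelocity_mem_Icc {M : ℝ} (hγ_nonneg : ∀ k < N, 0 ≤ γ k)
    (hγ_sum : ∑ k ∈ Finset.range N, γ k = 1) (hv : ∀ i, v (u i) ∈ Icc 0 M) (j : ℤ) :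
    nonlocalVelocity N γ v u j ∈ Icc 0 M := by
  refine ⟨Finset.sum_nonneg fun k hk => ?_, ?_⟩
  · exact mul_nonneg (hγ_nonneg k (Finset.mem_range.1 hk)) (hv _).1
  · calc nonlocalVelocity N γ v u j ≤ ∑ k ∈ Finset.range N, γ k * M :=
          Finset.sum_le_sum fun k hk =>
            mul_le_mul_of_nonneg_left (hv _).2 (hγ_nonneg k (Finset.mem_range.1 hk))
      _ = M := by rw [← Finset.sum_mul, hγ_sum, one_mul]

lemma nonlocalVelocity_sub_mem_Icc (hN : 1 ≤ N) (hγ_nonneg : ∀ k < N, 0 ≤ γ k)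
    (hγ_anti : ∀ k, k + 1 < N → γ (k + 1) ≤ γ k) {a b : ℝ} (hv : ∀ i, v (u i) ∈ Icc a b)
    (j : ℤ) :
    nonlocalVelocity N γ v u j - nonlocalVelocity N γ v u (j - 1) ∈
      Icc (γ 0 * (a - v (u j))) (γ 0 * (b - v (u j))) := by
  set f : ℕ → ℝ := fun k => v (u (j + k))
  have hf : ∀ k, f k ∈ Icc a b := fun k => hv _
  have hsum : nonlocalVelocity N γ v u j - nonlocalVelocity N γ v u (j - 1) =
      ∑ k ∈ Finset.range N, γ k * f (k + 1) - ∑ k ∈ Finset.range N, γ k * f k := by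
    simp only [nonlocalVelocity, f, Nat.cast_succ, add_assoc]
    congr 1
    exact Finset.sum_congr rfl fun k _ => by rw [show j - 1 + ((k : ℤ) + 1) = j + k by ring]
  have hf₀ : f 0 = v (u j) := by simp [f]
  rw [hsum, ← hf₀]
  exact ⟨le_sum_mul_succ_sub_sum_mul hN hγ_nonneg hγ_anti fun k _ _ => (hf k).1,
    sum_mul_succ_sub_sum_mul_le hN hγ_nonneg hγ_anti fun k _ _ => (hf k).2⟩

end NonlocalVelocity

lemma mul_flux_le_of_cfl {lam V G A B Mv Mg Lv Lg δ : ℝ} (hlam : 0 ≤ lam) (hV : V ∈ Icc 0 Mv)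
    (hG : G ∈ Icc 0 Mg) (hLv : 0 ≤ Lv) (hLg : 0 ≤ Lg) (hδ : 0 ≤ δ) (hA : A ≤ Lg * δ)
    (hB : B ≤ Lv * δ) (hCFL : lam * (Lv * Mg + Mv * Lg) ≤ 1) :
    lam * (V * A + G * B) ≤ δ := by
  have hVA : V * A ≤ Mv * (Lg * δ) :=
    (mul_le_mul_of_nonneg_left hA hV.1).trans (mul_le_mul_of_nonneg_right hV.2 (by positivity))
  have hGB : G * B ≤ Mg * (Lv * δ) :=
    (mul_le_mul_of_nonneg_left hB hG.1).trans (mul_le_mul_of_nonneg_right hG.2 (by positivity))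
  calc lam * (V * A + G * B) ≤ lam * (Lv * Mg + Mv * Lg) * δ := by
        rw [mul_assoc]
        gcongr
        linarith
    _ ≤ δ := mul_le_of_le_one_left hδ hCFL

lemma godunovStep_mem_Icc {N : ℕ} {γ : ℕ → ℝ} {g v : ℝ → ℝ} {u : ℤ → ℝ}
    {lam ρm ρM Mg Mv : ℝ} {Lg Lv : ℝ≥0}
    (hg_mono : MonotoneOn g (Icc ρm ρM)) (hg_lip : LipschitzOnWith Lg g (Icc ρm ρM))
    (hg_maps : MapsTo g (Icc ρm ρM) (Icc 0 Mg))
    (hv_anti : AntitoneOn v (Icc ρm ρM)) (hv_lip : LipschitzOnWith Lv v (Icc ρm ρM))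
    (hv_maps : MapsTo v (Icc ρm ρM) (Icc 0 Mv))
    (hN : 1 ≤ N) (hγ_nonneg : ∀ k < N, 0 ≤ γ k) (hγ_anti : ∀ k, k + 1 < N → γ (k + 1) ≤ γ k)
    (hγ_sum : ∑ k ∈ Finset.range N, γ k = 1)
    (hlam : 0 ≤ lam) (hCFL : lam * (γ 0 * Lv * Mg + Mv * Lg) ≤ 1)
    (hu : ∀ i, u i ∈ Icc ρm ρM) (j : ℤ) :
    godunovStep lam g (nonlocalVelocity N γ v u) u j ∈ Icc ρm ρM := by
  set V := nonlocalVelocity N γ v u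
  have hρ : ρm ≤ ρM := (hu j).1.trans (hu j).2
  have hV := nonlocalVelocity_mem_Icc hγ_nonneg hγ_sum (fun i => hv_maps (hu i)) j
  have hΔV := nonlocalVelocity_sub_mem_Icc (a := v ρM) (b := v ρm) hN hγ_nonneg hγ_anti
    (fun i => ⟨hv_anti (hu i) (right_mem_Icc.2 hρ) (hu i).2,
      hv_anti (left_mem_Icc.2 hρ) (hu i) (hu i).1⟩) j
  have hG := hg_maps (hu (j - 1))
  have hγ₀ := hγ_nonneg 0 hN
  have hγLv : 0 ≤ γ 0 * Lv := mul_nonneg hγ₀ Lv.2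
  constructor
  · have hA : g (u j) - g (u (j - 1)) ≤ Lg * (u j - ρm) := by
      have hlip := hg_lip.abs_sub_le_mul_sub (left_mem_Icc.2 hρ) (hu j) (hu j).1
      have hmono := hg_mono (left_mem_Icc.2 hρ) (hu (j - 1)) (hu (j - 1)).1
      linarith [le_abs_self (g (u j) - g ρm)]
    have hB : V j - V (j - 1) ≤ γ 0 * Lv * (u j - ρm) := by
      have hlip := hv_lip.abs_sub_le_mul_sub (left_mem_Icc.2 hρ) (hu j) (hu j).1
      calc V j - V (j - 1) ≤ γ 0 * (v ρm - v (u j)) := hΔV.2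
        _ ≤ γ 0 * (Lv * (u j - ρm)) := by gcongr; linarith [neg_abs_le (v (u j) - v ρm)]
        _ = γ 0 * Lv * (u j - ρm) := by ring
    have := mul_flux_le_of_cfl hlam hV hG hγLv Lg.2 (sub_nonneg.2 (hu j).1) hA hB hCFL
    simp only [godunovStep]
    linear_combination this
  · have hA : g (u (j - 1)) - g (u j) ≤ Lg * (ρM - u j) := by
      have hlip := hg_lip.abs_sub_le_mul_sub (hu j) (right_mem_Icc.2 hρ) (hu j).2
      have hmono := hg_mono (hu (j - 1)) (right_mem_Icc.2 hρ) (hu (j - 1)).2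
      linarith [le_abs_self (g ρM - g (u j))]
    have hB : V (j - 1) - V j ≤ γ 0 * Lv * (ρM - u j) := by
      have hlip := hv_lip.abs_sub_le_mul_sub (hu j) (right_mem_Icc.2 hρ) (hu j).2
      calc V (j - 1) - V j ≤ γ 0 * (v (u j) - v ρM) := by linarith [hΔV.1]
        _ ≤ γ 0 * (Lv * (ρM - u j)) := by gcongr; linarith [neg_abs_le (v ρM - v (u j))]
        _ = γ 0 * Lv * (ρM - u j) := by ring
    have := mul_flux_le_of_cfl hlam hV hG hγLv Lg.2 (sub_nonneg.2 (hu j).2) hA hB hCFL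
    simp only [godunovStep]
    linear_combination this

theorem godunov_maximum_principle_general
    (ρmax : ℝ)
    (g g' v v' : ℝ → ℝ)
    (hg_deriv : ∀ x ∈ Set.Icc (0:ℝ) ρmax, HasDerivAt g (g' x) x)
    (hg'_cont : ContinuousOn g' (Set.Icc 0 ρmax))
    (hg_nonneg : ∀ x ∈ Set.Icc (0:ℝ) ρmax, 0 ≤ g x)
    (hg'_nonneg : ∀ x ∈ Set.Icc (0:ℝ) ρmax, 0 ≤ g' x)
    (hv_deriv : ∀ x ∈ Set.Icc (0:ℝ) ρmax, HasDerivAt v (v' x) x)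
    (hv'_cont : ContinuousOn v' (Set.Icc 0 ρmax))
    (hv_nonneg : ∀ x ∈ Set.Icc (0:ℝ) ρmax, 0 ≤ v x)
    (hv'_nonpos : ∀ x ∈ Set.Icc (0:ℝ) ρmax, v' x ≤ 0)
    (N : ℕ) (hN : 1 ≤ N) (γ : ℕ → ℝ)
    (hγ_nonneg : ∀ k < N, 0 ≤ γ k)
    (hγ_mono : ∀ k, k + 1 < N → γ (k + 1) ≤ γ k)
    (hγ_sum : ∑ k ∈ Finset.range N, γ k = 1)
    (lam : ℝ) (hlam : 0 < lam)
    (hCFL : lam * (γ 0 * supAbs v' (Set.Icc 0 ρmax) * supAbs g (Set.Icc 0 ρmax)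
        + supAbs v (Set.Icc 0 ρmax) * supAbs g' (Set.Icc 0 ρmax)) ≤ 1)
    (ρm ρM : ℝ) (hρm : 0 ≤ ρm) (hρM : ρM ≤ ρmax)
    (ρ : ℕ → ℤ → ℝ)
    (hinit : ∀ j, ρ 0 j ∈ Set.Icc ρm ρM)
    (V : ℕ → ℤ → ℝ)
    (hV : ∀ n j, V n j = ∑ k ∈ Finset.range N, γ k * v (ρ n (j + k + 1)))
    (hscheme : ∀ n j, ρ (n + 1) j =
      ρ n j - lam * (V n j * g (ρ n j) - V n (j - 1) * g (ρ n (j - 1)))) :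
    ∀ n j, ρm ≤ ρ n j ∧ ρ n j ≤ ρM := by
  have hI := Icc_subset_Icc hρm hρM
  have hg_cont := HasDerivAt.continuousOn hg_deriv
  have hv_cont := HasDerivAt.continuousOn hv_deriv
  have hg_lip := lipschitzOnWith_supAbs_of_hasDerivAt isCompact_Icc (convex_Icc 0 ρmax)
    hg_deriv hg'_cont
  have hv_lip := lipschitzOnWith_supAbs_of_hasDerivAt isCompact_Icc (convex_Icc 0 ρmax)
    hv_deriv hv'_cont
  intro n
  induction n with
  | zero => exact hinit
  | succ n ih =>
    intro j
    rw [hscheme, show V n = nonlocalVelocity N γ v (ρ n) from funext (hV n)]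
    refine godunovStep_mem_Icc
      ((monotoneOn_of_hasDerivAt_nonneg (convex_Icc 0 ρmax) hg_deriv hg'_nonneg).mono hI)
      (hg_lip.mono hI) ((mapsTo_Icc_supAbs isCompact_Icc hg_cont hg_nonneg).mono_left hI)
      ((antitoneOn_of_hasDerivAt_nonpos (convex_Icc 0 ρmax) hv_deriv hv'_nonpos).mono hI)
      (hv_lip.mono hI) ((mapsTo_Icc_supAbs isCompact_Icc hv_cont hv_nonneg).mono_left hI)
      hN hγ_nonneg hγ_mono hγ_sum hlam.le ?_ ih j
    simpa only [Real.coe_toNNReal _ (supAbs_nonneg _ _)] using hCFL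

theorem godunov_maximum_principle
    (ρmax : ℝ) (hρmax : 0 < ρmax)
    (g g' v v' : ℝ → ℝ)
    (hg_deriv : ∀ x ∈ Set.Icc (0:ℝ) ρmax, HasDerivAt g (g' x) x)
    (hg'_cont : ContinuousOn g' (Set.Icc 0 ρmax))
    (hg_nonneg : ∀ x ∈ Set.Icc (0:ℝ) ρmax, 0 ≤ g x)
    (hg'_nonneg : ∀ x ∈ Set.Icc (0:ℝ) ρmax, 0 ≤ g' x)
    (hv_deriv : ∀ x ∈ Set.Icc (0:ℝ) ρmax, HasDerivAt v (v' x) x)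
    (hv'_cont : ContinuousOn v' (Set.Icc 0 ρmax))
    (hv_nonneg : ∀ x ∈ Set.Icc (0:ℝ) ρmax, 0 ≤ v x)
    (hv'_nonpos : ∀ x ∈ Set.Icc (0:ℝ) ρmax, v' x ≤ 0)
    (N : ℕ) (hN : 1 ≤ N) (γ : ℕ → ℝ)
    (hγ_nonneg : ∀ k < N, 0 ≤ γ k)
    (hγ_mono : ∀ k, k + 1 < N → γ (k + 1) ≤ γ k)
    (hγ_sum : ∑ k ∈ Finset.range N, γ k = 1)
    (lam : ℝ) (hlam : 0 < lam)
    (hCFL : lam * (γ 0 * supAbs v' (Set.Icc 0 ρmax) * supAbs g (Set.Icc 0 ρmax)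
        + supAbs v (Set.Icc 0 ρmax) * supAbs g' (Set.Icc 0 ρmax)) ≤ 1)
    (ρm ρM : ℝ) (hρm : 0 ≤ ρm) (hρM : ρM ≤ ρmax)
    (ρ : ℕ → ℤ → ℝ)
    (hinit : ∀ j, ρ 0 j ∈ Set.Icc ρm ρM)
    (V : ℕ → ℤ → ℝ)
    (hV : ∀ n j, V n j = ∑ k ∈ Finset.range N, γ k * v (ρ n (j + k + 1)))
    (hscheme : ∀ n j, ρ (n + 1) j =
      ρ n j - lam * (V n j * g (ρ n j) - V n (j - 1) * g (ρ n (j - 1)))) :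
    ∀ n j, ρm ≤ ρ n j ∧ ρ n j ≤ ρM :=
  godunov_maximum_principle_general ρmax g g' v v' hg_deriv hg'_cont hg_nonneg hg'_nonneg hv_deriv
    hv'_cont hv_nonneg hv'_nonpos N hN γ hγ_nonneg hγ_mono hγ_sum lam hlam hCFL ρm ρM hρm hρM ρ
    hinit V hV hscheme
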